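/- arXiv:2601.17196 — 6 statements merged into one kernel-verified Lean document; each statement's English description precedes it below -/
import Mathlib

section
/- Let θ : ℕ → ℝ be defined by θ₀ = 1 and θ_{t+1} = θ_t(√(θ_t² + 4) − θ_t)/2. Then 0 < θ_t ≤ 2/(t+2) for all t ≥ 0. -/
theorem theta_bound
    (θ : ℕ → ℝ)
    (h0 : θ 0 = 1)
    (hrec : ∀ t, θ (t + 1) = θ t * (Real.sqrt ((θ t) ^ 2 + 4) - θ t) / 2) :
    ∀ t : ℕ, 0 < θ t ∧ θ t ≤ 2 / (t + 2) := by
  intro t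
  induction t with
  | zero => refine ⟨by rw [h0]; norm_num, by rw [h0]; norm_num⟩
  | succ t ih =>
    obtain ⟨hpos, hle⟩ := ih
    set x := θ t with hx
    have hs0 : (0:ℝ) ≤ x ^ 2 + 4 := by positivity
    have hsq : Real.sqrt (x ^ 2 + 4) ^ 2 = x ^ 2 + 4 := Real.sq_sqrt hs0
    have hsnn : 0 ≤ Real.sqrt (x ^ 2 + 4) := Real.sqrt_nonneg _
    set s := Real.sqrt (x ^ 2 + 4) with hsdef
    have hs2 : 2 ≤ s := by nlinarith
    have hxs : x < s := by nlinarith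
    have ht2 : (0:ℝ) < (t : ℝ) + 2 := by positivity
    have h1 : x * ((t : ℝ) + 2) ≤ 2 := by
      rw [le_div_iff₀ ht2] at hle; linarith
    rw [hrec]
    refine ⟨by have := mul_pos hpos (sub_pos.mpr hxs); linarith, ?_⟩
    push_cast
    rw [div_le_div_iff₀ (by norm_num) (by positivity)]
    nlinarith [mul_nonneg (le_of_lt hpos) (sub_nonneg.mpr hxs.le),
      mul_le_mul_of_nonneg_left h1 (sub_nonneg.mpr hxs.le)]
end

section
/- For all real numbers a, b > 0 with a, b ≤ M, it holds that ρ(a,b) ≥ (a − b)²/(2M), where ρ(a,b) = b − a + a·log(a/b). -/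
theorem rho_strong_convexity
    (a b M : ℝ) (ha : 0 < a) (hb : 0 < b) (haM : a ≤ M) (hbM : b ≤ M) :
    b - a + a * Real.log (a / b) ≥ (a - b) ^ 2 / (2 * M) := by
  have hM : 0 < M := lt_of_lt_of_le ha haM
  set f : ℝ → ℝ := fun t => t - a + a * Real.log a - a * Real.log t - (a - t)^2/(2*M) with hf
  have hd : ∀ t : ℝ, 0 < t → HasDerivAt f ((t - a) * (M - t) / (t * M)) t := by
    intro t ht
    have hlog : HasDerivAt (fun t : ℝ => a * Real.log t) (a * t⁻¹) t :=
      (Real.hasDerivAt_log ht.ne').const_mul a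
    have hsq : HasDerivAt (fun t : ℝ => (a - t)^2 / (2*M))
        ((2 * (a - t) ^ 1 * (0 - 1)) / (2*M)) t :=
      (((hasDerivAt_const t a).sub (hasDerivAt_id t)).pow 2).div_const (2*M)
    have hmain : HasDerivAt f (1 - a * t⁻¹ - (2 * (a - t) ^ 1 * (0 - 1)) / (2*M)) t := by
      have h1 : HasDerivAt (fun t : ℝ => t - a + a * Real.log a) 1 t := by
        simpa using ((hasDerivAt_id t).sub_const a).add_const (a * Real.log a)
      exact (h1.sub hlog).sub hsq
    convert hmain using 1
    field_simp
    ring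
  have hcont : ∀ s : Set ℝ, s ⊆ Set.Ioi (0:ℝ) → ContinuousOn f s := by
    intro s hs
    exact fun x hx => ((hd x (hs hx)).continuousAt).continuousWithinAt
  have key : f b ≥ 0 := by
    rcases lt_trichotomy a b with hab | hab | hab
    · have hmono : MonotoneOn f (Set.Icc a b) := by
        apply monotoneOn_of_deriv_nonneg (convex_Icc a b)
        · exact hcont _ (fun x hx => lt_of_lt_of_le ha hx.1)
        · intro x hx
          rw [interior_Icc] at hx
          exact (hd x (ha.trans hx.1)).differentiableAt.differentiableWithinAt
        · intro x hx
          rw [interior_Icc] at hx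
          rw [(hd x (ha.trans hx.1)).deriv]
          have hxa : 0 ≤ x - a := by linarith [hx.1]
          have hxM : 0 ≤ M - x := by linarith [hx.2]
          have hx0 : 0 < x := ha.trans hx.1
          exact div_nonneg (mul_nonneg hxa hxM) (by positivity)
      have := hmono (Set.left_mem_Icc.2 hab.le) (Set.right_mem_Icc.2 hab.le) hab.le
      have hfa : f a = 0 := by simp [hf]
      linarith
    · subst hab
      simp [hf]
    · have hmono : AntitoneOn f (Set.Icc b a) := by
        apply antitoneOn_of_deriv_nonpos (convex_Icc b a)
        · exact hcont _ (fun x hx => lt_of_lt_of_le hb hx.1)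
        · intro x hx
          rw [interior_Icc] at hx
          exact (hd x (hb.trans hx.1)).differentiableAt.differentiableWithinAt
        · intro x hx
          rw [interior_Icc] at hx
          rw [(hd x (hb.trans hx.1)).deriv]
          have hxa : x - a ≤ 0 := by linarith [hx.2]
          have hxM : 0 ≤ M - x := by linarith [hx.2]
          have hx0 : 0 < x := hb.trans hx.1
          have : (x - a) * (M - x) ≤ 0 := mul_nonpos_of_nonpos_of_nonneg hxa hxM
          exact div_nonpos_of_nonpos_of_nonneg this (by positivity)
      have := hmono (Set.left_mem_Icc.2 hab.le) (Set.right_mem_Icc.2 hab.le) hab.le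
      have hfa : f a = 0 := by simp [hf]
      linarith
  have hlogdiv : Real.log (a / b) = Real.log a - Real.log b := Real.log_div ha.ne' hb.ne'
  simp only [hf] at key
  rw [hlogdiv]
  nlinarith [key]
end

section
/- For a, b > 0, b − a + a·log(a/b) ≥ (a−b)²/(2·max(a,b)). -/
open Real

/-- For `x ≥ 1`, `2(x-1)/(x+1) ≤ log x`. -/
lemma two_sub_div_le_log {x : ℝ} (hx : 1 ≤ x) : 2 * (x - 1) / (x + 1) ≤ Real.log x := by
  set f : ℝ → ℝ := fun x => Real.log x - 2 * (x - 1) / (x + 1) with hf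
  have key : ∀ y ∈ Set.Ici (1 : ℝ), 0 ≤ f y := by
    have hmono : MonotoneOn f (Set.Ici 1) := by
      have hderiv : ∀ y ∈ interior (Set.Ici (1 : ℝ)), 0 ≤ deriv f y := by
        intro y hy
        rw [interior_Ici] at hy
        have hy1 : (1 : ℝ) < y := hy
        have hy0 : (0 : ℝ) < y := by linarith
        have hy1' : y + 1 ≠ 0 := by positivity
        have h1 : HasDerivAt (fun y : ℝ => Real.log y) y⁻¹ y := Real.hasDerivAt_log (ne_of_gt hy0)
        have h2 : HasDerivAt (fun y : ℝ => 2 * (y - 1) / (y + 1))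
            ((2 * (y + 1) - 2 * (y - 1) * 1) / (y + 1) ^ 2) y := by
          have hnum : HasDerivAt (fun y : ℝ => 2 * (y - 1)) 2 y := by
            simpa using ((hasDerivAt_id y).sub_const 1).const_mul (2 : ℝ)
          have hden : HasDerivAt (fun y : ℝ => y + 1) 1 y := (hasDerivAt_id y).add_const 1
          exact hnum.div hden hy1'
        have hfd : HasDerivAt f (y⁻¹ - (2 * (y + 1) - 2 * (y - 1) * 1) / (y + 1) ^ 2) y :=
          h1.sub h2
        rw [hfd.deriv]
        have hpos : (0:ℝ) < y * (y + 1) ^ 2 := by positivity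
        rw [sub_nonneg, div_le_iff₀ (by positivity : (0:ℝ) < (y+1)^2), inv_eq_one_div,
          div_mul_eq_mul_div, le_div_iff₀ hy0]
        nlinarith [sq_nonneg (y - 1)]
      have hcont : ContinuousOn f (Set.Ici 1) := by
        apply ContinuousOn.sub
        · exact Real.continuousOn_log.mono (by intro y hy; simp at hy ⊢; linarith)
        · apply ContinuousOn.div
          · fun_prop
          · fun_prop
          · intro y hy; simp at hy; intro h; linarith
      have hdiff : ∀ y ∈ interior (Set.Ici (1:ℝ)), DifferentiableAt ℝ f y := by
        intro y hy
        rw [interior_Ici] at hy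
        have hy1 : (1:ℝ) < y := hy
        exact (Real.differentiableAt_log (by linarith)).sub
          ((((differentiable_id.sub_const 1).const_mul 2) y).div
            ((differentiable_id.add_const 1) y)
            (by intro h; linarith))
      exact monotoneOn_of_deriv_nonneg (convex_Ici 1) hcont
        (fun y hy => (hdiff y hy).differentiableWithinAt) hderiv
    intro y hy
    have h0 : f 1 = 0 := by simp [hf]
    have := hmono (Set.self_mem_Ici) hy hy
    rw [h0] at this
    exact this
  have := key x hx
  simpa [hf, sub_nonneg] using this

theorem rho_lower_bound_max
    (a b : ℝ) (ha : 0 < a) (hb : 0 < b) :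
    b - a + a * Real.log (a / b) ≥ (a - b) ^ 2 / (2 * max a b) := by
  rcases le_total b a with hba | hab
  · -- a ≥ b, max = a
    rw [max_eq_left hba]
    have hx : 1 ≤ a / b := (one_le_div hb).mpr hba
    have hlog : 2 * (a / b - 1) / (a / b + 1) ≤ Real.log (a / b) := two_sub_div_le_log hx
    have hab' : 0 < a + b := by linarith
    have h1 : 2 * (a / b - 1) / (a / b + 1) = 2 * (a - b) / (a + b) := by
      rw [div_eq_div_iff (by positivity) hab'.ne']
      field_simp
    rw [h1] at hlog
    have h2 : a * (2 * (a - b) / (a + b)) ≤ a * Real.log (a / b) :=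
      mul_le_mul_of_nonneg_left hlog ha.le
    have h3 : b - a + a * (2 * (a - b) / (a + b)) = (a - b) ^ 2 / (a + b) := by
      field_simp
      ring
    have h4 : (a - b) ^ 2 / (2 * a) ≤ (a - b) ^ 2 / (a + b) :=
      div_le_div_of_nonneg_left (sq_nonneg _) hab' (by linarith)
    linarith
  · -- b ≥ a, max = b
    rw [max_eq_right hab]
    have hy : 1 ≤ b / a := (one_le_div ha).mpr hab
    have hy0 : 0 < b / a := by positivity
    have hlogy : 0 ≤ Real.log (b / a) := Real.log_nonneg hy
    have hsinh : Real.log (b / a) ≤ Real.sinh (Real.log (b / a)) :=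
      Real.self_le_sinh_iff.mpr hlogy
    rw [Real.sinh_log hy0] at hsinh
    have hinv : (b / a)⁻¹ = a / b := by rw [inv_div]
    rw [hinv] at hsinh
    have hloginv : Real.log (a / b) = - Real.log (b / a) := by
      rw [← Real.log_inv, inv_div]
    have h2 : a * Real.log (a / b) ≥ a * (-((b / a - a / b) / 2)) := by
      rw [hloginv]
      have := mul_le_mul_of_nonneg_left hsinh ha.le
      linarith
    have h3 : a * (-((b / a - a / b) / 2)) = (a ^ 2 - b ^ 2) / (2 * b) := by
      field_simp
      ring
    have h4 : b - a + (a ^ 2 - b ^ 2) / (2 * b) = (a - b) ^ 2 / (2 * b) := by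
      field_simp
      ring
    linarith
end

section
/- Let δ : ℕ → ℝ be nonnegative with δ₀ = 0, let θ : ℕ → ℝ satisfy θ₀ = 1, 0 < θ_t ≤ 1, and θ_{t+1}² = θ_t²(1 − θ_{t+1}). Let a : ℕ → ℝ be nonnegative and suppose δ_{t+1} ≤ (1 − θ_t)δ_t + (L/2)θ_t²(a_t − a_{t+1}) for all t ≥ 0, where L ≥ 0. Then ((1 − θ_t)/θ_t²)δ_t + (L/2)a_t ≤ (L/2)a₀ for all t ≥ 1, and consequently δ_t ≤ (L/2)θ_{t−1}² a₀. -/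
theorem accelerated_telescoping
    (δ θ a : ℕ → ℝ) (L : ℝ) (hL : 0 ≤ L)
    (hδ : ∀ t, 0 ≤ δ t) (hδ0 : δ 0 = 0)
    (hθ0 : θ 0 = 1) (hθpos : ∀ t, 0 < θ t) (hθle : ∀ t, θ t ≤ 1)
    (hθrec : ∀ t, (θ (t + 1)) ^ 2 = (θ t) ^ 2 * (1 - θ (t + 1)))
    (ha : ∀ t, 0 ≤ a t)
    (hrec : ∀ t, δ (t + 1) ≤ (1 - θ t) * δ t + (L / 2) * (θ t) ^ 2 * (a t - a (t + 1))) :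
    ∀ t ≥ 1,
      ((1 - θ t) / (θ t) ^ 2) * δ t + (L / 2) * a t ≤ (L / 2) * a 0 ∧
        δ t ≤ (L / 2) * (θ (t - 1)) ^ 2 * a 0 := by
  have hsq : ∀ t, (0:ℝ) < (θ t) ^ 2 := fun t => pow_pos (hθpos t) 2
  -- key ratio identity: (1 - θ (t+1)) / θ (t+1)^2 = 1 / θ t ^ 2
  have hratio : ∀ t, (1 - θ (t + 1)) / (θ (t + 1)) ^ 2 = 1 / (θ t) ^ 2 := by
    intro t
    have h1 : 0 < 1 - θ (t + 1) := by
      have := hθrec t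
      nlinarith [hsq (t + 1), hsq t]
    rw [hθrec t, mul_comm, div_mul_eq_div_div, div_self h1.ne']
  have key : ∀ t, δ (t + 1) / (θ t) ^ 2 + (L / 2) * a (t + 1) ≤ (L / 2) * a 0 := by
    intro t
    induction t with
    | zero =>
      have h := hrec 0
      rw [hθ0, hδ0] at h
      simp only [hθ0]
      nlinarith
    | succ n ih =>
      have h := hrec (n + 1)
      have hdiv : δ (n + 2) / (θ (n + 1)) ^ 2 ≤
          ((1 - θ (n + 1)) / (θ (n + 1)) ^ 2) * δ (n + 1)
            + (L / 2) * (a (n + 1) - a (n + 2)) := by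
        rw [div_le_iff₀ (hsq (n + 1))]
        have hpos := hsq (n + 1)
        calc δ (n + 2) ≤ (1 - θ (n + 1)) * δ (n + 1)
              + (L / 2) * (θ (n + 1)) ^ 2 * (a (n + 1) - a (n + 2)) := h
          _ = (((1 - θ (n + 1)) / (θ (n + 1)) ^ 2) * δ (n + 1)
              + (L / 2) * (a (n + 1) - a (n + 2))) * (θ (n + 1)) ^ 2 := by
            field_simp [(hθpos (n + 1)).ne']
      rw [hratio n] at hdiv
      have : δ (n + 2) / (θ (n + 1)) ^ 2 + (L / 2) * a (n + 2) ≤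
          δ (n + 1) / (θ n) ^ 2 + (L / 2) * a (n + 1) := by
        have : (1 / (θ n) ^ 2) * δ (n + 1) = δ (n + 1) / (θ n) ^ 2 := by ring
        linarith [hdiv, this ▸ hdiv]
      linarith
  intro t ht
  obtain ⟨s, rfl⟩ : ∃ s, t = s + 1 := ⟨t - 1, by omega⟩
  have h1 : ((1 - θ (s + 1)) / (θ (s + 1)) ^ 2) * δ (s + 1) + (L / 2) * a (s + 1)
      ≤ (L / 2) * a 0 := by
    rw [hratio s]
    have : (1 / (θ s) ^ 2) * δ (s + 1) = δ (s + 1) / (θ s) ^ 2 := by ring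
    rw [this]
    exact key s
  refine ⟨h1, ?_⟩
  have h2 : δ (s + 1) / (θ s) ^ 2 ≤ (L / 2) * a 0 := by
    have := key s
    have haa : 0 ≤ (L / 2) * a (s + 1) := mul_nonneg (by linarith) (ha _)
    linarith
  have : δ (s + 1) ≤ (L / 2) * a 0 * (θ s) ^ 2 := by
    rw [div_le_iff₀ (hsq s)] at h2
    exact h2
  simpa [mul_comm, mul_assoc, mul_left_comm] using this
end

section
/- Let δ : ℕ → ℝ satisfy 0 ≤ δ_t ≤ 4nLR²/(t+1)² for all t, where n, L, R > 0. Let E : ℕ → ℝ be nonnegative and suppose that for all j ≤ t, δ_j ≥ (1/63)·Σ_{i=j}^{t} E_i². If additionally E_i ≥ ε′ > 0 for all i ≤ t, then t ≤ 1 + (12√(14nL)·R/ε′)^{2/3}. -/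
theorem iteration_bound
    (δ E : ℕ → ℝ) (n L R ε' : ℝ)
    (hn : 0 < n) (hL : 0 < L) (hR : 0 < R) (hε : 0 < ε')
    (t : ℕ)
    (hδ : ∀ j : ℕ, 0 ≤ δ j ∧ δ j ≤ 4 * n * L * R ^ 2 / ((j : ℝ) + 1) ^ 2)
    (hE : ∀ i, 0 ≤ E i)
    (hsum : ∀ j ≤ t, δ j ≥ (1 / 63) * ∑ i ∈ Finset.Icc j t, (E i) ^ 2)
    (hEε : ∀ i ≤ t, E i ≥ ε') :
    (t : ℝ) ≤ 1 + (12 * Real.sqrt (14 * n * L) * R / ε') ^ ((2 : ℝ) / 3) := by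
  set j := (t + 1) / 2 with hj
  have hjt : j ≤ t := by omega
  have hcard : (Finset.Icc j t).card = t + 1 - j := Nat.card_Icc j t
  have hsumlb : ((t + 1 - j : ℕ) : ℝ) * ε' ^ 2 ≤ ∑ i ∈ Finset.Icc j t, (E i) ^ 2 := by
    rw [← hcard]
    calc ((Finset.Icc j t).card : ℝ) * ε' ^ 2 = ∑ _i ∈ Finset.Icc j t, ε' ^ 2 := by
          rw [Finset.sum_const, nsmul_eq_mul]
      _ ≤ _ := Finset.sum_le_sum fun i hi => by
          have h1 := hEε i (Finset.mem_Icc.mp hi).2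
          have h2 := hE i
          nlinarith [hε.le]
  have h1 := hsum j hjt
  have h2 := (hδ j).2
  have hjl : ((t : ℝ) + 2) / 2 ≤ (j : ℝ) + 1 := by
    have h : t + 2 ≤ 2 * j + 2 := by omega
    have := (Nat.cast_le (α := ℝ)).mpr h
    push_cast at this ⊢
    linarith
  have hcl : ((t : ℝ) + 1) / 2 ≤ ((t + 1 - j : ℕ) : ℝ) := by
    have h : t + 1 ≤ 2 * (t + 1 - j) := by omega
    have := (Nat.cast_le (α := ℝ)).mpr h
    push_cast at this ⊢
    linarith
  have hjpos : (0 : ℝ) < ((j : ℝ) + 1) ^ 2 := by positivity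
  have h2' : δ j * ((j : ℝ) + 1) ^ 2 ≤ 4 * n * L * R ^ 2 := by
    rw [div_eq_mul_inv] at h2
    calc δ j * ((j : ℝ) + 1) ^ 2
        ≤ (4 * n * L * R ^ 2 * (((j : ℝ) + 1) ^ 2)⁻¹) * ((j : ℝ) + 1) ^ 2 := by
          apply mul_le_mul_of_nonneg_right h2 hjpos.le
      _ = 4 * n * L * R ^ 2 := by field_simp
  have htpos : (0 : ℝ) ≤ (t : ℝ) := Nat.cast_nonneg t
  have key : ε' ^ 2 * ((t : ℝ) + 1) ^ 3 ≤ 2016 * n * L * R ^ 2 := by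
    have hδj : (1 / 63) * (((t : ℝ) + 1) / 2 * ε' ^ 2) ≤ δ j := by
      have : (1 / 63) * (((t : ℝ) + 1) / 2 * ε' ^ 2)
          ≤ (1 / 63) * (((t + 1 - j : ℕ) : ℝ) * ε' ^ 2) := by
        have := mul_le_mul_of_nonneg_right hcl (sq_nonneg ε')
        linarith
      calc (1 / 63) * (((t : ℝ) + 1) / 2 * ε' ^ 2)
          ≤ (1 / 63) * (((t + 1 - j : ℕ) : ℝ) * ε' ^ 2) := this
        _ ≤ (1 / 63) * ∑ i ∈ Finset.Icc j t, (E i) ^ 2 := by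
            apply mul_le_mul_of_nonneg_left hsumlb; norm_num
        _ ≤ δ j := h1
    have hδnn := (hδ j).1
    nlinarith [mul_le_mul_of_nonneg_right hδj hjpos.le,
      mul_le_mul hjl hjl (by linarith) (by linarith),
      sq_nonneg ((t : ℝ) + 1), sq_nonneg ε', mul_pos hn hL, sq_nonneg R,
      mul_nonneg (mul_nonneg hδnn (by linarith : (0:ℝ) ≤ ((t:ℝ)+2)/2 - 0)) htpos]
  set C := 12 * Real.sqrt (14 * n * L) * R / ε' with hC
  have hCpos : 0 < C := by
    apply div_pos _ hε
    have : 0 < Real.sqrt (14 * n * L) := Real.sqrt_pos.mpr (by positivity)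
    positivity
  have hCsq : C ^ 2 = 2016 * n * L * R ^ 2 / ε' ^ 2 := by
    rw [hC, div_pow, mul_pow, mul_pow, Real.sq_sqrt (by positivity : (0:ℝ) ≤ 14 * n * L)]
    ring
  have hcube : ((t : ℝ) + 1) ^ 3 ≤ C ^ 2 := by
    rw [hCsq, le_div_iff₀ (by positivity)]
    linarith [key]
  have hrpow : (C ^ ((2 : ℝ) / 3)) ^ (3 : ℕ) = C ^ 2 := by
    rw [← Real.rpow_natCast (C ^ ((2 : ℝ) / 3)) 3, ← Real.rpow_mul hCpos.le]
    norm_num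
  have hfin : (t : ℝ) + 1 ≤ C ^ ((2 : ℝ) / 3) := by
    by_contra h
    push_neg at h
    have h3 : (C ^ ((2 : ℝ) / 3)) ^ (3 : ℕ) < ((t : ℝ) + 1) ^ (3 : ℕ) := by
      apply pow_lt_pow_left₀ h (Real.rpow_nonneg hCpos.le _)
      norm_num
    rw [hrpow] at h3
    linarith [hcube]
  linarith
end

section
/- Let φ(u,v,w) = Σ_{i,j} exp(−C_{ij}/γ + u_i + v_j + w) + Σ_i e^{u_i} + Σ_j e^{v_j} − ⟨u,r⟩ − ⟨v,c⟩ − w·s with r having positive entries. After the u-update u′_i = u_i + log r_i − log(Σ_j exp(−C_{ij}/γ + u_i + v_j + w) + e^{u_i}) for all i (v, w unchanged), the dual decrease satisfies φ(u,v,w) − φ(u′,v,w) = Σ_i ρ(r_i, b_i), where b_i = Σ_j exp(−C_{ij}/γ + u_i + v_j + w) + e^{u_i} and ρ(a,b) = b − a + a·log(a/b). -/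
noncomputable def potDual (n : ℕ) (γ : ℝ) (C : Fin n → Fin n → ℝ)
    (r c : Fin n → ℝ) (s : ℝ) (u v : Fin n → ℝ) (w : ℝ) : ℝ :=
  (∑ i, ∑ j, Real.exp (-(C i j) / γ + u i + v j + w))
    + (∑ i, Real.exp (u i)) + (∑ j, Real.exp (v j))
    - (∑ i, u i * r i) - (∑ j, v j * c j) - w * s

theorem u_update_decrease
    (n : ℕ) (γ : ℝ) (hγ : 0 < γ)
    (C : Fin n → Fin n → ℝ)
    (r c : Fin n → ℝ) (hr : ∀ i, 0 < r i)
    (s : ℝ)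
    (u v : Fin n → ℝ) (w : ℝ)
    (b : Fin n → ℝ)
    (hb : ∀ i, b i = (∑ j, Real.exp (-(C i j) / γ + u i + v j + w)) + Real.exp (u i))
    (u' : Fin n → ℝ)
    (hu' : ∀ i, u' i = u i + Real.log (r i) - Real.log (b i)) :
    potDual n γ C r c s u v w - potDual n γ C r c s u' v w
      = ∑ i, (b i - r i + r i * Real.log (r i / b i)) := by
  have hbpos : ∀ i, 0 < b i := by
    intro i
    rw [hb i]
    have h1 : 0 ≤ ∑ j, Real.exp (-(C i j) / γ + u i + v j + w) :=
      Finset.sum_nonneg fun j _ => (Real.exp_pos _).le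
    linarith [Real.exp_pos (u i)]
  have hexp : ∀ i, Real.exp (u' i) = Real.exp (u i) * (r i / b i) := by
    intro i
    rw [hu' i, Real.exp_sub, Real.exp_add, Real.exp_log (hr i), Real.exp_log (hbpos i),
      mul_div_assoc]
  have hrow : ∀ i, (∑ j, Real.exp (-(C i j) / γ + u' i + v j + w)) + Real.exp (u' i) = r i := by
    intro i
    have h1 : ∀ j, Real.exp (-(C i j) / γ + u' i + v j + w)
        = Real.exp (-(C i j) / γ + u i + v j + w) * (r i / b i) := by
      intro j
      have : -(C i j) / γ + u' i + v j + w = (-(C i j) / γ + u i + v j + w) + (u' i - u i) := by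
        ring
      rw [this, Real.exp_add, hu' i]
      have : u i + Real.log (r i) - Real.log (b i) - u i = Real.log (r i) - Real.log (b i) := by
        ring
      rw [this, Real.exp_sub, Real.exp_log (hr i), Real.exp_log (hbpos i)]
    simp only [h1, hexp, ← Finset.sum_mul]
    rw [← add_mul, ← hb i, mul_div_cancel₀ _ (hbpos i).ne']
  unfold potDual
  have key : (∑ i, ∑ j, Real.exp (-(C i j) / γ + u i + v j + w))
      + (∑ i, Real.exp (u i))
      - ((∑ i, ∑ j, Real.exp (-(C i j) / γ + u' i + v j + w)) + (∑ i, Real.exp (u' i)))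
      - ((∑ i, u i * r i) - (∑ i, u' i * r i))
      = ∑ i, (b i - r i + r i * Real.log (r i / b i)) := by
    rw [← Finset.sum_add_distrib, ← Finset.sum_add_distrib, ← Finset.sum_sub_distrib,
      ← Finset.sum_sub_distrib, ← Finset.sum_sub_distrib]
    apply Finset.sum_congr rfl
    intro i _
    rw [hrow i, ← hb i, hu' i, Real.log_div (hr i).ne' (hbpos i).ne']
    ring
  linarith [key]
end
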